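/- arXiv:2002.10208 — 4 statements merged into one kernel-verified Lean document; each statement's English description precedes it below -/
import Mathlib

section
/- Let φ : [0,∞) → [0,∞) be an index function (continuous, strictly increasing, φ(0)=0) and let p > 0 be such that the function t ↦ t^p / φ(t) is nondecreasing on (0, κ²]. Suppose r_λ : [0,κ²] → ℝ is a family of functions satisfying sup_{t ∈ [0,κ²]} |r_λ(t)| ≤ γ and sup_{t ∈ [0,κ²]} |r_λ(t)| t^p ≤ γ_p λ^p for all λ ∈ (0, κ²]. Then sup_{t ∈ [0,κ²]} |r_λ(t)| φ(t) ≤ max(γ, γ_p) φ(λ) for all λ ∈ (0, κ²]. -/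
/-! Below `λ` the residual is bounded by `γ` and `φ t ≤ φ λ` by monotonicity. Above `λ` the
qualification condition gives `φ t ≤ (t / λ) ^ p φ λ`, which turns the bound `|r_λ(t)| t ^ p ≤ γ_p λ ^ p`
into `|r_λ(t)| φ(t) ≤ γ_p φ(λ)`. -/

open Set

lemma pos_of_strictMonoOn_Ici {φ : ℝ → ℝ} (hφm : StrictMonoOn φ (Ici 0)) (hφ0 : φ 0 = 0)
    {s : ℝ} (hs : 0 < s) : 0 < φ s :=
  hφ0 ▸ hφm self_mem_Ici hs.le hs

lemma nonneg_of_strictMonoOn_Ici {φ : ℝ → ℝ} (hφm : StrictMonoOn φ (Ici 0)) (hφ0 : φ 0 = 0)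
    {s : ℝ} (hs : 0 ≤ s) : 0 ≤ φ s :=
  hφ0 ▸ hφm.monotoneOn self_mem_Ici hs hs

lemma mul_le_mul_of_div_le_div {a c u v x y : ℝ} (ha : 0 ≤ a) (hu : 0 < u) (hx : 0 < x)
    (hy : 0 < y) (hdiv : u / x ≤ v / y) (h : a * v ≤ c * u) : a * y ≤ c * x := by
  have hcross : u * y ≤ v * x := (div_le_div_iff₀ hx hy).mp hdiv
  refine le_of_mul_le_mul_right ?_ hu
  calc a * y * u = a * (u * y) := by ring
    _ ≤ a * (v * x) := by gcongr
    _ = a * v * x := by ring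
    _ ≤ c * u * x := by gcongr
    _ = c * x * u := by ring

theorem stmt1_general (κ : ℝ)
    (φ : ℝ → ℝ)
    (hφm : StrictMonoOn φ (Set.Ici 0)) (hφ0 : φ 0 = 0)
    (p : ℝ)
    (hcover : ∀ s t : ℝ, 0 < s → s ≤ t → t ≤ κ ^ 2 → s ^ p / φ s ≤ t ^ p / φ t)
    (r : ℝ → ℝ → ℝ) (γ γp : ℝ)
    (hγ : ∀ lam ∈ Set.Ioc (0 : ℝ) (κ ^ 2), ∀ t ∈ Set.Icc (0 : ℝ) (κ ^ 2), |r lam t| ≤ γ)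
    (hγp : ∀ lam ∈ Set.Ioc (0 : ℝ) (κ ^ 2), ∀ t ∈ Set.Icc (0 : ℝ) (κ ^ 2),
      |r lam t| * t ^ p ≤ γp * lam ^ p) :
    ∀ lam ∈ Set.Ioc (0 : ℝ) (κ ^ 2), ∀ t ∈ Set.Icc (0 : ℝ) (κ ^ 2),
      |r lam t| * φ t ≤ max γ γp * φ lam := by
  intro lam hlam t ht
  have hφlam : 0 < φ lam := pos_of_strictMonoOn_Ici hφm hφ0 hlam.1
  rcases le_or_gt t lam with hle | hlt
  · calc |r lam t| * φ t ≤ γ * φ lam :=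
          mul_le_mul (hγ lam hlam t ht) (hφm.monotoneOn ht.1 hlam.1.le hle)
            (nonneg_of_strictMonoOn_Ici hφm hφ0 ht.1) ((abs_nonneg _).trans (hγ lam hlam t ht))
      _ ≤ max γ γp * φ lam := by gcongr; exact le_max_left _ _
  · calc |r lam t| * φ t ≤ γp * φ lam :=
          mul_le_mul_of_div_le_div (abs_nonneg _) (Real.rpow_pos_of_pos hlam.1 p) hφlam
            (pos_of_strictMonoOn_Ici hφm hφ0 (hlam.1.trans hlt))
            (hcover lam t hlam.1 hlt.le ht.2) (hγp lam hlam t ht)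
      _ ≤ max γ γp * φ lam := by gcongr; exact le_max_right _ _

theorem stmt1 (κ : ℝ) (hκ : 0 < κ)
    (φ : ℝ → ℝ) (hφc : ContinuousOn φ (Set.Ici 0))
    (hφm : StrictMonoOn φ (Set.Ici 0)) (hφ0 : φ 0 = 0)
    (p : ℝ) (hp : 0 < p)
    (hcover : ∀ s t : ℝ, 0 < s → s ≤ t → t ≤ κ ^ 2 → s ^ p / φ s ≤ t ^ p / φ t)
    (r : ℝ → ℝ → ℝ) (γ γp : ℝ)
    (hγ : ∀ lam ∈ Set.Ioc (0 : ℝ) (κ ^ 2), ∀ t ∈ Set.Icc (0 : ℝ) (κ ^ 2), |r lam t| ≤ γ)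
    (hγp : ∀ lam ∈ Set.Ioc (0 : ℝ) (κ ^ 2), ∀ t ∈ Set.Icc (0 : ℝ) (κ ^ 2),
      |r lam t| * t ^ p ≤ γp * lam ^ p) :
    ∀ lam ∈ Set.Ioc (0 : ℝ) (κ ^ 2), ∀ t ∈ Set.Icc (0 : ℝ) (κ ^ 2),
      |r lam t| * φ t ≤ max γ γp * φ lam :=
  stmt1_general κ φ hφm hφ0 p hcover r γ γp hγ hγp
end

section
/- Let φ be a nondecreasing index function covered by the qualification p ≥ 1 of a regularization scheme with residual functions r_λ (so sup_t |r_λ(t)| ≤ γ, sup_t |r_λ(t)| t^p ≤ γ_p λ^p, and sup_t |r_λ(t)| φ(t) ≤ c_p φ(λ) with c_p = max(γ, γ_p)). Then for all λ ∈ (0, κ²], sup_{σ ∈ [0,κ²]} |r_λ(σ)| φ(λ + σ) ≤ 2^p c_p φ(λ). -/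
/-! Since `λ + σ ≤ 2 max(λ, σ)`, monotonicity of `t ↦ t ^ p / φ t` gives
`φ(λ + σ) ≤ 2 ^ p φ(max(λ, σ))`. For `σ ≤ λ` it remains to bound `|r_λ(σ)| ≤ γ ≤ c_p`; for
`λ ≤ σ` the qualification bound `|r_λ(σ)| φ(σ) ≤ c_p φ(λ)` finishes the proof. -/

open Set

section IndexFunction

variable {φ : ℝ → ℝ}

lemma StrictMonoOn.pos_of_map_zero (hφm : StrictMonoOn φ (Ici 0)) (hφ0 : φ 0 = 0)
    {x : ℝ} (hx : 0 < x) : 0 < φ x :=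
  hφ0 ▸ hφm self_mem_Ici hx.le hx

lemma map_mul_le_rpow_mul_map_of_rpow_div_monotone {p : ℝ}
    (hcover : ∀ s t : ℝ, 0 < s → s ≤ t → s ^ p / φ s ≤ t ^ p / φ t)
    {x c : ℝ} (hx : 0 < x) (hc : 1 ≤ c) (hφx : 0 < φ x) (hφcx : 0 < φ (c * x)) :
    φ (c * x) ≤ c ^ p * φ x := by
  have h := hcover x (c * x) hx (le_mul_of_one_le_left hx.le hc)
  rw [Real.mul_rpow (by linarith) hx.le, div_le_div_iff₀ hφx hφcx] at h
  have hxp : 0 < x ^ p := Real.rpow_pos_of_pos hx p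
  nlinarith

lemma map_add_le_two_rpow_mul_map_max (hφm : StrictMonoOn φ (Ici 0)) (hφ0 : φ 0 = 0)
    {p : ℝ} (hcover : ∀ s t : ℝ, 0 < s → s ≤ t → s ^ p / φ s ≤ t ^ p / φ t)
    {a b : ℝ} (ha : 0 < a) (hb : 0 ≤ b) :
    φ (a + b) ≤ 2 ^ p * φ (max a b) := by
  have hm : 0 < max a b := lt_max_of_lt_left ha
  calc φ (a + b) ≤ φ (2 * max a b) :=
        hφm.monotoneOn (mem_Ici.2 (by linarith)) (mem_Ici.2 (by linarith))
          (by linarith [le_max_left a b, le_max_right a b])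
    _ ≤ 2 ^ p * φ (max a b) :=
        map_mul_le_rpow_mul_map_of_rpow_div_monotone hcover hm one_le_two
          (hφm.pos_of_map_zero hφ0 hm) (hφm.pos_of_map_zero hφ0 (by linarith))

end IndexFunction

theorem stmt2_general (κ : ℝ)
    (φ : ℝ → ℝ)
    (hφm : StrictMonoOn φ (Set.Ici 0)) (hφ0 : φ 0 = 0)
    (p : ℝ)
    (hcover : ∀ s t : ℝ, 0 < s → s ≤ t → s ^ p / φ s ≤ t ^ p / φ t)
    (r : ℝ → ℝ → ℝ) (γ γp cp : ℝ) (hcp : cp = max γ γp)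
    (hγ : ∀ lam ∈ Set.Ioc (0 : ℝ) (κ ^ 2), ∀ t ∈ Set.Icc (0 : ℝ) (κ ^ 2), |r lam t| ≤ γ)
    (hqual : ∀ lam ∈ Set.Ioc (0 : ℝ) (κ ^ 2), ∀ t ∈ Set.Icc (0 : ℝ) (κ ^ 2),
      |r lam t| * φ t ≤ cp * φ lam) :
    ∀ lam ∈ Set.Ioc (0 : ℝ) (κ ^ 2), ∀ sg ∈ Set.Icc (0 : ℝ) (κ ^ 2),
      |r lam sg| * φ (lam + sg) ≤ 2 ^ p * cp * φ lam := by
  intro lam hlam sg hsg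
  have hsum := map_add_le_two_rpow_mul_map_max hφm hφ0 hcover hlam.1 hsg.1
  have h2p : (0 : ℝ) < 2 ^ p := Real.rpow_pos_of_pos two_pos p
  have hφlam : 0 < φ lam := hφm.pos_of_map_zero hφ0 hlam.1
  calc |r lam sg| * φ (lam + sg) ≤ |r lam sg| * (2 ^ p * φ (max lam sg)) :=
        mul_le_mul_of_nonneg_left hsum (abs_nonneg _)
    _ = 2 ^ p * (|r lam sg| * φ (max lam sg)) := by ring
    _ ≤ 2 ^ p * (cp * φ lam) := by
        refine mul_le_mul_of_nonneg_left ?_ h2p.le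
        rcases le_total sg lam with h | h
        · rw [max_eq_left h]
          have hγcp : γ ≤ cp := hcp ▸ le_max_left γ γp
          exact mul_le_mul_of_nonneg_right ((hγ lam hlam sg hsg).trans hγcp) hφlam.le
        · rw [max_eq_right h]
          exact hqual lam hlam sg hsg
    _ = 2 ^ p * cp * φ lam := by ring

theorem stmt2 (κ : ℝ) (hκ : 0 < κ)
    (φ : ℝ → ℝ) (hφc : ContinuousOn φ (Set.Ici 0))
    (hφm : StrictMonoOn φ (Set.Ici 0)) (hφ0 : φ 0 = 0)
    (p : ℝ) (hp : 1 ≤ p)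
    (hcover : ∀ s t : ℝ, 0 < s → s ≤ t → s ^ p / φ s ≤ t ^ p / φ t)
    (r : ℝ → ℝ → ℝ) (γ γp cp : ℝ) (hcp : cp = max γ γp)
    (hγ : ∀ lam ∈ Set.Ioc (0 : ℝ) (κ ^ 2), ∀ t ∈ Set.Icc (0 : ℝ) (κ ^ 2), |r lam t| ≤ γ)
    (hγp : ∀ lam ∈ Set.Ioc (0 : ℝ) (κ ^ 2), ∀ t ∈ Set.Icc (0 : ℝ) (κ ^ 2),
      |r lam t| * t ^ p ≤ γp * lam ^ p)
    (hqual : ∀ lam ∈ Set.Ioc (0 : ℝ) (κ ^ 2), ∀ t ∈ Set.Icc (0 : ℝ) (κ ^ 2),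
      |r lam t| * φ t ≤ cp * φ lam) :
    ∀ lam ∈ Set.Ioc (0 : ℝ) (κ ^ 2), ∀ sg ∈ Set.Icc (0 : ℝ) (κ ^ 2),
      |r lam sg| * φ (lam + sg) ≤ 2 ^ p * cp * φ lam :=
  stmt2_general κ φ hφm hφ0 p hcover r γ γp cp hcp hγ hqual
end

section
/- Let G, H be bounded nonnegative self-adjoint operators on a Hilbert space H satisfying ‖G u‖ ≤ ‖H u‖ for all u ∈ H. Then for every exponent 0 < q ≤ 1, ‖G^q u‖ ≤ ‖H^q u‖ for all u ∈ H. -/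
/-!
The pointwise inequality `‖G u‖ ≤ ‖H u‖` is the operator inequality `G * G ≤ H * H`, and
`G ^ q * G ^ q = (G * G) ^ q`. The claim is therefore the Löwner–Heinz theorem: `a ↦ a ^ q` is
operator monotone for `0 ≤ q ≤ 1` (`CFC.rpow_le_rpow`).
-/

open scoped InnerProductSpace

namespace ContinuousLinearMap

variable {𝕜 E : Type*} [RCLike 𝕜] [NormedAddCommGroup E] [InnerProductSpace 𝕜 E] [CompleteSpace E]

lemma inner_star_mul_self_apply (T : E →L[𝕜] E) (x : E) :
    ⟪(star T * T) x, x⟫_𝕜 = (‖T x‖ ^ 2 : ℝ) := by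
  rw [star_eq_adjoint, mul_apply_eq_comp, adjoint_inner_left, inner_self_eq_norm_sq_to_K]
  norm_cast

lemma star_mul_self_le_star_mul_self_iff (T S : E →L[𝕜] E) :
    star T * T ≤ star S * S ↔ ∀ x, ‖T x‖ ≤ ‖S x‖ := by
  rw [le_def, isPositive_iff' _]
  simp only [((IsSelfAdjoint.star_mul_self S).sub (IsSelfAdjoint.star_mul_self T)), true_and,
    sub_apply, inner_sub_left, inner_star_mul_self_apply]
  refine forall_congr' fun x => ?_
  rw [← RCLike.ofReal_sub, RCLike.ofReal_nonneg, sub_nonneg]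
  exact pow_le_pow_iff_left₀ (norm_nonneg _) (norm_nonneg _) two_ne_zero

end ContinuousLinearMap

namespace CFC

variable {A : Type*} [CStarAlgebra A] [PartialOrder A] [StarOrderedRing A]

lemma rpow_mul_self {a : A} (ha : 0 ≤ a) {q : ℝ} (hq : 0 ≤ q) :
    a ^ q * a ^ q = (a * a) ^ q := by
  have mul_self_eq_rpow_two : ∀ b : A, 0 ≤ b → b * b = b ^ (2 : ℝ) := fun b hb => by
    rw [← pow_two]; exact_mod_cast (rpow_natCast b 2 hb).symm
  rw [mul_self_eq_rpow_two _ rpow_nonneg, mul_self_eq_rpow_two a ha,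
    rpow_rpow_of_exponent_nonneg _ _ _ hq zero_le_two,
    rpow_rpow_of_exponent_nonneg _ _ _ zero_le_two hq, mul_comm]

lemma rpow_mul_self_le_rpow_mul_self {a b : A} (ha : 0 ≤ a) (hb : 0 ≤ b) (hab : a * a ≤ b * b)
    {q : ℝ} (hq : q ∈ Set.Icc 0 1) :
    a ^ q * a ^ q ≤ b ^ q * b ^ q := by
  rw [rpow_mul_self ha hq.1, rpow_mul_self hb hq.1]
  exact rpow_le_rpow hq hab

end CFC

/-- Heinz inequality: if `‖G u‖ ≤ ‖H u‖` for bounded nonnegative self-adjoint operators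
`G, H`, then `‖G^q u‖ ≤ ‖H^q u‖` for every `0 < q ≤ 1`, the fractional powers being
given by the continuous functional calculus. -/
theorem stmt5 {E : Type*} [NormedAddCommGroup E] [InnerProductSpace ℂ E]
    [CompleteSpace E] (G H : E →L[ℂ] E) (hG : G.IsPositive) (hH : H.IsPositive)
    (hle : ∀ u : E, ‖G u‖ ≤ ‖H u‖) (q : ℝ) (hq0 : 0 < q) (hq1 : q ≤ 1) :
    ∀ u : E, ‖cfc (fun t : ℝ => t ^ q) G u‖ ≤ ‖cfc (fun t : ℝ => t ^ q) H u‖ := by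
  have hG0 : 0 ≤ G := G.nonneg_iff_isPositive.mpr hG
  have hH0 : 0 ≤ H := H.nonneg_iff_isPositive.mpr hH
  have hsq : G * G ≤ H * H := by
    simpa only [hG.isSelfAdjoint.star_eq, hH.isSelfAdjoint.star_eq] using
      (G.star_mul_self_le_star_mul_self_iff H).mpr hle
  have hpow : G ^ q * G ^ q ≤ H ^ q * H ^ q :=
    CFC.rpow_mul_self_le_rpow_mul_self hG0 hH0 hsq ⟨hq0.le, hq1⟩
  rw [← CFC.rpow_eq_cfc_real hG0, ← CFC.rpow_eq_cfc_real hH0]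
  refine (ContinuousLinearMap.star_mul_self_le_star_mul_self_iff _ _).mp ?_
  simpa only [(CFC.rpow_nonneg (a := G)).isSelfAdjoint.star_eq,
    (CFC.rpow_nonneg (a := H)).isSelfAdjoint.star_eq] using hpow
end

section
/- Let g_λ : [0, κ²] → ℝ be a regularization scheme satisfying sup_t |t g_λ(t)| ≤ D and sup_t |g_λ(t)| ≤ B/λ, and let ϱ be an index function with ϱ² sub-linear. Then for all λ ∈ (0,1], sup_{t ∈ [0,κ²]} ϱ(t+λ) (t+λ)^{1/2} |g_λ(t)| ≤ (B + D) ϱ(λ) λ^{-1/2}. -/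
/-!
Write `s = t + λ`. The two scheme bounds add up to `s |g_λ(t)| ≤ B + D`, and sub-linearity of `ϱ²`
says `ϱ(s) / √s` is nonincreasing, so
`ϱ(s) √s |g_λ(t)| = (ϱ(s) / √s) · s |g_λ(t)| ≤ (ϱ(λ) / √λ) (B + D)`.
-/

open Real

lemma StrictMonoOn.pos_of_map_zero_s14 {f : ℝ → ℝ} (hf : StrictMonoOn f (Set.Ici 0)) (h0 : f 0 = 0)
    {x : ℝ} (hx : 0 < x) : 0 < f x :=
  h0 ▸ hf Set.self_mem_Ici hx.le hx

lemma div_sqrt_le_div_sqrt_of_div_sq_le {u v a b : ℝ} (hu : 0 < u) (hv : 0 < v) (ha : 0 < a)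
    (hb : 0 < b) (h : u / a ^ 2 ≤ v / b ^ 2) : b / √v ≤ a / √u := by
  rw [div_le_div_iff₀ (sq_pos_of_pos ha) (sq_pos_of_pos hb)] at h
  rw [div_le_div_iff₀ (sqrt_pos.2 hv) (sqrt_pos.2 hu)]
  refine (pow_le_pow_iff_left₀ (by positivity) (by positivity) two_ne_zero).1 ?_
  rw [mul_pow, mul_pow, sq_sqrt hu.le, sq_sqrt hv.le]
  linarith

lemma add_mul_abs_le_of_abs_le_div {t lam y B D : ℝ} (ht : 0 ≤ t) (hlam : 0 < lam)
    (hB : |y| ≤ B / lam) (hD : |t * y| ≤ D) : (t + lam) * |y| ≤ B + D := by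
  rw [le_div_iff₀ hlam] at hB
  rw [abs_mul, abs_of_nonneg ht] at hD
  linarith

theorem stmt14_general (κ : ℝ) (g : ℝ → ℝ → ℝ) (B D : ℝ)
    (hD : ∀ lam ∈ Set.Ioc (0 : ℝ) 1, ∀ t ∈ Set.Icc (0 : ℝ) (κ ^ 2), |t * g lam t| ≤ D)
    (hB : ∀ lam ∈ Set.Ioc (0 : ℝ) 1, ∀ t ∈ Set.Icc (0 : ℝ) (κ ^ 2), |g lam t| ≤ B / lam)
    (ϱ : ℝ → ℝ)
    (hm : StrictMonoOn ϱ (Set.Ici 0)) (h0 : ϱ 0 = 0)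
    (hsub : ∀ u v : ℝ, 0 < u → u ≤ v → u / ϱ u ^ 2 ≤ v / ϱ v ^ 2) :
    ∀ lam ∈ Set.Ioc (0 : ℝ) 1, ∀ t ∈ Set.Icc (0 : ℝ) (κ ^ 2),
      ϱ (t + lam) * (t + lam) ^ ((1 : ℝ) / 2) * |g lam t| ≤
        (B + D) * ϱ lam * lam ^ (-(1 : ℝ) / 2) := by
  intro lam hlam t ht
  have hs : 0 < t + lam := by linarith [ht.1, hlam.1]
  have hϱl : 0 < ϱ lam := hm.pos_of_map_zero_s14 h0 hlam.1
  have hϱ : ϱ (t + lam) / √(t + lam) ≤ ϱ lam / √lam :=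
    div_sqrt_le_div_sqrt_of_div_sq_le hlam.1 hs hϱl (hm.pos_of_map_zero_s14 h0 hs)
      (hsub _ _ hlam.1 (by linarith [ht.1]))
  have hg : (t + lam) * |g lam t| ≤ B + D :=
    add_mul_abs_le_of_abs_le_div ht.1 hlam.1 (hB lam hlam t ht) (hD lam hlam t ht)
  rw [← sqrt_eq_rpow, neg_div, rpow_neg hlam.1.le, ← sqrt_eq_rpow]
  calc ϱ (t + lam) * √(t + lam) * |g lam t|
      = ϱ (t + lam) / √(t + lam) * ((t + lam) * |g lam t|) := by
        field_simp; rw [sq_sqrt hs.le]; ring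
    _ ≤ ϱ lam / √lam * (B + D) := by gcongr
    _ = (B + D) * ϱ lam * (√lam)⁻¹ := by ring

theorem stmt14 (κ : ℝ) (hκ : 0 < κ) (g : ℝ → ℝ → ℝ) (B D : ℝ)
    (hD : ∀ lam ∈ Set.Ioc (0 : ℝ) 1, ∀ t ∈ Set.Icc (0 : ℝ) (κ ^ 2), |t * g lam t| ≤ D)
    (hB : ∀ lam ∈ Set.Ioc (0 : ℝ) 1, ∀ t ∈ Set.Icc (0 : ℝ) (κ ^ 2), |g lam t| ≤ B / lam)
    (ϱ : ℝ → ℝ) (hc : ContinuousOn ϱ (Set.Ici 0))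
    (hm : StrictMonoOn ϱ (Set.Ici 0)) (h0 : ϱ 0 = 0)
    (hsub : ∀ u v : ℝ, 0 < u → u ≤ v → u / ϱ u ^ 2 ≤ v / ϱ v ^ 2) :
    ∀ lam ∈ Set.Ioc (0 : ℝ) 1, ∀ t ∈ Set.Icc (0 : ℝ) (κ ^ 2),
      ϱ (t + lam) * (t + lam) ^ ((1 : ℝ) / 2) * |g lam t| ≤
        (B + D) * ϱ lam * lam ^ (-(1 : ℝ) / 2) :=
  stmt14_general κ g B D hD hB ϱ hm h0 hsub
end
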